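/- The flag f̄-vector of an Eulerian quasi-graded poset of rank n+1 satisfies the generalized Dehn–Sommerville relations: for any S ⊆ {1,…,n} and any i, k ∈ S ∪ {0, n+1} with i < k and S ∩ {i+1,…,k−1} = ∅, one has ∑_{j=i}^{k} (−1)^j · f̄_{S ∪ {j}} = 0 (with the conventions f̄_{S∪{0}} = f̄_{S∪{n+1}} = f̄_S). -/

import Mathlib

open scoped Classical
open Finset

noncomputable section

/-- The free noncommutative algebra `ℚ⟨a,b⟩`. -/
abbrev QA : Type := FreeAlgebra ℚ Bool

/-- The variable `a`. -/
def av : QA := FreeAlgebra.ι ℚ true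

/-- The variable `b`. -/
def bv : QA := FreeAlgebra.ι ℚ false

/-- `c = a + b`. -/
def cvar : QA := av + bv

/-- `d = ab + ba`. -/
def dvar : QA := av * bv + bv * av

variable {α : Type*}

/-- The `ζ̄`-weight of a chain encoded as `f : Fin (k+1) → α`:
the product of the values of `ζ̄` on consecutive elements. -/
def chainZeta (ζ : α → α → ℚ) {k : ℕ} (f : Fin (k + 1) → α) : ℚ :=
  (List.ofFn (fun i : Fin k => ζ (f i.castSucc) (f i.succ))).prod

/-- The `ab`-weight of a chain: `(a-b)^{g₁-1} · b · (a-b)^{g₂-1} · b ⋯ b · (a-b)^{g_k-1}`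
where `gᵢ` are the successive rank gaps along the chain. -/
def chainWt (ρ : α → ℕ) {k : ℕ} (f : Fin (k + 1) → α) : QA :=
  (List.ofFn (fun i : Fin k =>
    (if (i : ℕ) = 0 then 1 else bv) *
      (av - bv) ^ (ρ (f i.succ) - ρ (f i.castSucc) - 1))).prod

/-- `f` encodes a (strict) chain from `x` to `z`. -/
def IsChainFrom [PartialOrder α] {k : ℕ} (f : Fin (k + 1) → α) (x z : α) : Prop :=
  StrictMono f ∧ f 0 = x ∧ f (Fin.last k) = z

/-- The ab-index `Ψ` of the interval `[x,z]` of a quasi-graded poset: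
the sum over all chains from `x` to `z` of `ζ̄(c) · wt(c)`. -/
def abIndex [PartialOrder α] [Fintype α] (ρ : α → ℕ) (ζ : α → α → ℚ) (x z : α) : QA :=
  ∑ k ∈ Finset.range (Fintype.card α), ∑ f : Fin (k + 1) → α,
    if IsChainFrom f x z then chainZeta ζ f • chainWt ρ f else 0

/-- `(P,ρ,ζ̄)` is a quasi-graded poset: `ρ` is strictly order-preserving and `ζ̄`
is an element of the incidence algebra with `ζ̄(x,x) = 1`. -/
def IsQuasiGraded [PartialOrder α] (ρ : α → ℕ) (ζ : α → α → ℚ) : Prop :=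
  StrictMono ρ ∧ (∀ x, ζ x x = 1) ∧ ∀ x y : α, ¬ x ≤ y → ζ x y = 0

/-- Convolution in the incidence algebra. -/
def iaMul [PartialOrder α] [Fintype α] (f g : α → α → ℚ) : α → α → ℚ :=
  fun x z => ∑ y ∈ Finset.univ.filter (fun y => x ≤ y ∧ y ≤ z), f x y * g y z

/-- The identity `δ` of the incidence algebra. -/
def iaDelta : α → α → ℚ := fun x z => if x = z then 1 else 0

/-- The Eulerian condition on the interval `[x,z]`:
`∑_{x ≤ y ≤ z} (-1)^{ρ(y)-ρ(x)} ζ̄(x,y) ζ̄(y,z) = δ_{x,z}`. -/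
def EulerianAt [PartialOrder α] [Fintype α] (ρ : α → ℕ) (ζ : α → α → ℚ) (x z : α) : Prop :=
  (∑ y ∈ Finset.univ.filter (fun y => x ≤ y ∧ y ≤ z),
    (-1 : ℚ) ^ (ρ y - ρ x) * ζ x y * ζ y z) = iaDelta x z

/-- `(P,ρ,ζ̄)` is Eulerian. -/
def IsEulerian [PartialOrder α] [Fintype α] (ρ : α → ℕ) (ζ : α → α → ℚ) : Prop :=
  ∀ x z : α, x ≤ z → EulerianAt ρ ζ x z

/-- The flag `f̄`-vector: `f̄_S = ∑_c ζ̄(c)` over chains from `x` to `z`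
whose interior elements have ranks exactly `S`. -/
def flagF [PartialOrder α] [Fintype α] (ρ : α → ℕ) (ζ : α → α → ℚ)
    (x z : α) (S : Finset ℕ) : ℚ :=
  ∑ k ∈ Finset.range (Fintype.card α), ∑ f : Fin (k + 1) → α,
    if IsChainFrom f x z ∧
        (Finset.univ.filter (fun i : Fin (k + 1) => i ≠ 0 ∧ i ≠ Fin.last k)).image
          (fun i => ρ (f i)) = S
      then chainZeta ζ f else 0

/-- The flag `h̄`-vector: `h̄_S = ∑_{T ⊆ S} (-1)^{|S-T|} f̄_T`. -/
def flagH [PartialOrder α] [Fintype α] (ρ : α → ℕ) (ζ : α → α → ℚ)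
    (x z : α) (S : Finset ℕ) : ℚ :=
  ∑ T ∈ S.powerset, (-1 : ℚ) ^ (S.card - T.card) * flagF ρ ζ x z T

/-- Chains with respect to an explicit strict relation `lt`. -/
def IsChainFromRel (lt : α → α → Prop) {k : ℕ} (f : Fin (k + 1) → α) (x z : α) : Prop :=
  (∀ i j : Fin (k + 1), i < j → lt (f i) (f j)) ∧ f 0 = x ∧ f (Fin.last k) = z

/-- The ab-index with respect to an explicit strict order relation `lt`. -/
def abIndexRel [Fintype α] (lt : α → α → Prop) (ρ : α → ℕ) (ζ : α → α → ℚ)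
    (x z : α) : QA :=
  ∑ k ∈ Finset.range (Fintype.card α), ∑ f : Fin (k + 1) → α,
    if IsChainFromRel lt f x z then chainZeta ζ f • chainWt ρ f else 0

/-- The Eulerian condition with respect to an explicit order relation `le`. -/
def IsEulerianRel [Fintype α] (le : α → α → Prop) (ρ : α → ℕ) (ζ : α → α → ℚ) : Prop :=
  ∀ x z : α, le x z →
    (∑ y ∈ Finset.univ.filter (fun y => le x y ∧ le y z),
      (-1 : ℚ) ^ (ρ y - ρ x) * ζ x y * ζ y z) = (if x = z then (1 : ℚ) else 0)

/-- Carrier of the zipped poset: remove `x` and `y`; the element `z` plays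
the role of the new element `w`. -/
abbrev ZipCarrier (α : Type*) (x y : α) : Type _ := {u : α // u ≠ x ∧ u ≠ y}

/-- The strict order of the zipped poset: `u <_Q w` iff `u < x` or `u < y`,
`w <_Q v` iff `x < v`, and otherwise the order is inherited from `P`. -/
def zipLt [PartialOrder α] (x y z : α) : ZipCarrier α x y → ZipCarrier α x y → Prop :=
  fun u v =>
    if u.1 = z then v.1 ≠ z ∧ x < v.1
    else if v.1 = z then u.1 < x ∨ u.1 < y
    else u.1 < v.1

/-- The (non-strict) order of the zipped poset. -/
def zipLe [PartialOrder α] (x y z : α) : ZipCarrier α x y → ZipCarrier α x y → Prop :=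
  fun u v => zipLt x y z u v ∨ u = v

/-- The rank function of the zipped poset: `ρ_Q(w) = ρ(x)`, otherwise inherited. -/
def zipRank [PartialOrder α] (ρ : α → ℕ) (x y z : α) : ZipCarrier α x y → ℕ :=
  fun u => if u.1 = z then ρ x else ρ u.1

/-- The weighted zeta function of the zipped poset:
`ζ̄_Q(w,v) = ζ̄(x,v)`, `ζ̄_Q(u,w) = ζ̄(u,x) + ζ̄(u,y) - ζ̄(u,z)`, otherwise inherited. -/
def zipZeta [PartialOrder α] (ζ : α → α → ℚ) (x y z : α) :
    ZipCarrier α x y → ZipCarrier α x y → ℚ :=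
  fun u v =>
    if v.1 = z then (if u.1 = z then 1 else ζ u.1 x + ζ u.1 y - ζ u.1 z)
    else if u.1 = z then ζ x v.1
    else ζ u.1 v.1

/-!
Removing the bottom element of a chain gives `f̄_T[x,w] = ∑_{ρ y = r} ζ̄(x,y) f̄_{T∖{r}}[y,w]`
for `r = min T`. Applying this to the elements of `S` below `i` reduces the claim to an interval
whose bottom `x` has rank `i`. There the chains counted by `f̄_{S∪{j}}` pass through ranks `j`
and `k`, so the alternating sum becomes
`∑_{ρ z = k} (∑_{i ≤ ρ u ≤ k} (-1)^{ρ u} ζ̄(x,u) ζ̄(u,z)) f̄_{S∖{k}}[z,1̂]`,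
and every bracket vanishes by the Eulerian condition on `[x,z]`.
-/

theorem Finset.insert_eq_iff_eq_erase_min {β : Type*} [LinearOrder β] {a r : β}
    {I T : Finset β} (hI : ∀ t ∈ I, a < t) (hrT : r ∈ T) (hmin : ∀ t ∈ T, r ≤ t) :
    insert a I = T ↔ a = r ∧ I = T.erase r := by
  constructor
  · rintro rfl
    have har : a = r := by
      rcases Finset.mem_insert.1 hrT with h | h
      · exact h.symm
      · exact absurd (hI r h) (not_lt.2 (hmin a (Finset.mem_insert_self a I)))
    subst har
    exact ⟨rfl, (Finset.erase_insert fun h => lt_irrefl a (hI a h)).symm⟩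
  · rintro ⟨rfl, rfl⟩
    exact Finset.insert_erase hrT

section Chains

variable {k : ℕ}

def interiorRanks (ρ : α → ℕ) (f : Fin (k + 1) → α) : Finset ℕ :=
  (univ.filter fun i : Fin (k + 1) => i ≠ 0 ∧ i ≠ Fin.last k).image fun i => ρ (f i)

theorem mem_interiorRanks {ρ : α → ℕ} {f : Fin (k + 1) → α} {t : ℕ} :
    t ∈ interiorRanks ρ f ↔ ∃ i : Fin (k + 1), i ≠ 0 ∧ i ≠ Fin.last k ∧ ρ (f i) = t := by
  simp [interiorRanks, and_assoc]

theorem interiorRanks_eq_empty_iff (ρ : α → ℕ) (f : Fin (k + 1) → α) :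
    interiorRanks ρ f = ∅ ↔ k ≤ 1 := by
  simp only [Finset.eq_empty_iff_forall_notMem, mem_interiorRanks, not_exists, not_and,
    ← Fin.val_ne_iff, Fin.val_zero, Fin.val_last]
  refine ⟨fun h => ?_, fun hk t i hi0 hik => by omega⟩
  by_contra! hk
  exact h _ ⟨1, by omega⟩ (by simp) (by simp; omega) rfl

theorem interiorRanks_cons_succ (ρ : α → ℕ) (x : α) (g : Fin (k + 2) → α) :
    interiorRanks ρ (Fin.cons x g : Fin (k + 3) → α) = insert (ρ (g 0)) (interiorRanks ρ g) := by
  ext t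
  simp only [mem_interiorRanks, Finset.mem_insert, Fin.exists_fin_succ (n := k + 2),
    Fin.cons_zero, Fin.cons_succ, ← Fin.val_ne_iff, Fin.val_zero, Fin.val_last, Fin.val_succ]
  constructor
  · rintro (⟨h, -⟩ | ⟨i, -, hik, rfl⟩)
    · exact absurd rfl h
    · by_cases hi : (i : ℕ) = 0
      · exact Or.inl (by rw [show i = 0 from Fin.ext hi])
      · exact Or.inr ⟨i, hi, by omega, rfl⟩
  · rintro (rfl | ⟨i, -, hik, rfl⟩)
    · exact Or.inr ⟨0, by simp, by simp, rfl⟩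
    · exact Or.inr ⟨i, by omega, by omega, rfl⟩

theorem chainZeta_cons (ζ : α → α → ℚ) (x : α) (g : Fin (k + 1) → α) :
    chainZeta ζ (Fin.cons x g : Fin (k + 2) → α) = ζ x (g 0) * chainZeta ζ g := by
  simp only [chainZeta, List.ofFn_succ, List.prod_cons, ← Fin.succ_castSucc, Fin.cons_succ,
    Fin.castSucc_zero, Fin.cons_zero]

variable [PartialOrder α] {ρ : α → ℕ} {ζ : α → α → ℚ}

theorem IsChainFrom.rank_lt_of_mem_interiorRanks (hρ : StrictMono ρ) {f : Fin (k + 1) → α}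
    {x w : α} (hf : IsChainFrom f x w) {t : ℕ} (ht : t ∈ interiorRanks ρ f) : ρ x < t := by
  obtain ⟨i, hi, -, rfl⟩ := mem_interiorRanks.1 ht
  exact hf.2.1 ▸ hρ (hf.1 (Fin.pos_of_ne_zero hi))

theorem isChainFrom_cons_iff {x w : α} {g : Fin (k + 1) → α} (hxg : x < g 0) :
    IsChainFrom (Fin.cons x g : Fin (k + 2) → α) x w ↔ IsChainFrom g (g 0) w := by
  simp [IsChainFrom, show Fin.cons x g = Matrix.vecCons x g from rfl, hxg]

theorem isChainFrom_cons_and_interiorRanks_iff (hρ : StrictMono ρ) {x w : α} {T : Finset ℕ}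
    {r : ℕ} (hrT : r ∈ T) (hmin : ∀ t ∈ T, r ≤ t) (hrw : r < ρ w) {g : Fin (k + 1) → α}
    (hxg : x < g 0) :
    (IsChainFrom (Fin.cons x g : Fin (k + 2) → α) x w ∧
        interiorRanks ρ (Fin.cons x g : Fin (k + 2) → α) = T) ↔
      ρ (g 0) = r ∧ IsChainFrom g (g 0) w ∧ interiorRanks ρ g = T.erase r := by
  rw [isChainFrom_cons_iff hxg, and_left_comm]
  cases k with
  | zero =>
    rw [(interiorRanks_eq_empty_iff ρ _).2 le_rfl]
    refine and_congr_right fun hg => iff_of_false (fun hT => ?_) fun h => ?_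
    · exact Finset.notMem_empty r (hT ▸ hrT)
    · exact (h.1 ▸ hg.2.2 ▸ hrw).false
  | succ k =>
    rw [interiorRanks_cons_succ]
    exact and_congr_right fun hg => Finset.insert_eq_iff_eq_erase_min
      (fun t ht => hg.rank_lt_of_mem_interiorRanks hρ ht) hrT hmin

variable [Fintype α]

def chainSum (ρ : α → ℕ) (ζ : α → α → ℚ) (x w : α) (T : Finset ℕ) (k : ℕ) : ℚ :=
  ∑ f : Fin (k + 1) → α, if IsChainFrom f x w ∧ interiorRanks ρ f = T then chainZeta ζ f else 0

theorem chainSum_eq_zero {x w : α} {T : Finset ℕ}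
    (h : ∀ f : Fin (k + 1) → α, IsChainFrom f x w → interiorRanks ρ f ≠ T) :
    chainSum ρ ζ x w T k = 0 :=
  Finset.sum_eq_zero fun f _ => if_neg fun hf => h f hf.1 hf.2

theorem flagF_eq_sum_chainSum (x w : α) (T : Finset ℕ) {M : ℕ} (hM : Fintype.card α ≤ M) :
    flagF ρ ζ x w T = ∑ k ∈ range M, chainSum ρ ζ x w T k := by
  refine Finset.sum_subset (Finset.range_subset_range.2 hM) fun k _ hk => chainSum_eq_zero ?_
  intro f hf _
  have := Fintype.card_le_of_injective f hf.1.injective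
  simp only [Fintype.card_fin, Finset.mem_range] at this hk
  omega

theorem sum_rank_mul_ite_isChainFrom (c : α → ℚ) {w : α} {T : Finset ℕ} {r : ℕ}
    (g : Fin (k + 1) → α) :
    ∑ y ∈ univ.filter (fun y => ρ y = r),
        c y * (if IsChainFrom g y w ∧ interiorRanks ρ g = T then chainZeta ζ g else 0) =
      if ρ (g 0) = r ∧ IsChainFrom g (g 0) w ∧ interiorRanks ρ g = T
        then c (g 0) * chainZeta ζ g else 0 := by
  by_cases hr : ρ (g 0) = r
  · rw [Finset.sum_eq_single_of_mem (g 0) (by simp [hr])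
      fun y _ hy => by
        rw [if_neg fun (h : IsChainFrom g y w ∧ _) => hy h.1.2.1.symm, mul_zero]]
    simp only [hr, true_and, mul_ite, mul_zero]
  · rw [if_neg (not_and_of_not_left _ hr)]
    refine Finset.sum_eq_zero fun y hy => ?_
    rw [if_neg fun (h : IsChainFrom g y w ∧ _) => hr (h.1.2.1 ▸ (Finset.mem_filter.1 hy).2),
      mul_zero]

theorem chainSum_succ (hq : IsQuasiGraded ρ ζ) {x w : α} {T : Finset ℕ} {r : ℕ} (hrT : r ∈ T)
    (hmin : ∀ t ∈ T, r ≤ t) (hxr : ρ x < r) (hrw : r < ρ w) (k : ℕ) :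
    chainSum ρ ζ x w T (k + 1) =
      ∑ y ∈ univ.filter (fun y => ρ y = r), ζ x y * chainSum ρ ζ y w (T.erase r) k := by
  have hcons : ∀ g : Fin (k + 1) → α,
      (if IsChainFrom (Fin.cons x g : Fin (k + 2) → α) x w ∧
          interiorRanks ρ (Fin.cons x g : Fin (k + 2) → α) = T
        then chainZeta ζ (Fin.cons x g : Fin (k + 2) → α) else 0) =
      if ρ (g 0) = r ∧ IsChainFrom g (g 0) w ∧ interiorRanks ρ g = T.erase r
        then ζ x (g 0) * chainZeta ζ g else 0 := by
    intro g
    by_cases hxg : x < g 0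
    · rw [if_congr (isChainFrom_cons_and_interiorRanks_iff hq.1 hrT hmin hrw hxg) rfl rfl,
        chainZeta_cons]
    · rw [if_neg fun h => hxg (by simpa using h.1.1 (Fin.succ_pos 0))]
      split_ifs with h
      · rw [hq.2.2 x (g 0) fun hle => hxg (hle.lt_of_ne (by rintro rfl; omega)), zero_mul]
      · rfl
  calc chainSum ρ ζ x w T (k + 1)
      = ∑ p : α × (Fin (k + 1) → α),
          if IsChainFrom (Fin.cons p.1 p.2 : Fin (k + 2) → α) x w ∧
              interiorRanks ρ (Fin.cons p.1 p.2 : Fin (k + 2) → α) = T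
            then chainZeta ζ (Fin.cons p.1 p.2 : Fin (k + 2) → α) else 0 :=
        ((Fin.consEquiv fun _ => α).sum_comp _).symm
    _ = ∑ g : Fin (k + 1) → α,
          if ρ (g 0) = r ∧ IsChainFrom g (g 0) w ∧ interiorRanks ρ g = T.erase r
            then ζ x (g 0) * chainZeta ζ g else 0 := by
      rw [Fintype.sum_prod_type, Fintype.sum_eq_single x fun a ha => Finset.sum_eq_zero
        fun g _ => if_neg fun h => ha (by simpa using h.1.2.1)]
      exact Finset.sum_congr rfl fun g _ => hcons g
    _ = _ := by
      simp only [chainSum, Finset.mul_sum]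
      rw [Finset.sum_comm]
      exact Finset.sum_congr rfl fun g _ => (sum_rank_mul_ite_isChainFrom _ g).symm

theorem flagF_eq_sum_rank_mul (hq : IsQuasiGraded ρ ζ) {x w : α} {T : Finset ℕ} {r : ℕ}
    (hrT : r ∈ T) (hmin : ∀ t ∈ T, r ≤ t) (hxr : ρ x < r) (hrw : r < ρ w) :
    flagF ρ ζ x w T =
      ∑ y ∈ univ.filter (fun y => ρ y = r), ζ x y * flagF ρ ζ y w (T.erase r) := by
  have hzero : chainSum ρ ζ x w T 0 = 0 := chainSum_eq_zero fun f _ hf =>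
    Finset.notMem_empty r (((interiorRanks_eq_empty_iff ρ f).2 zero_le_one ▸ hf) ▸ hrT)
  rw [flagF_eq_sum_chainSum x w T (Nat.le_succ _), Finset.sum_range_succ', hzero, add_zero]
  simp only [chainSum_succ hq hrT hmin hxr hrw, flagF_eq_sum_chainSum _ w _ le_rfl,
    Finset.mul_sum]
  exact Finset.sum_comm

theorem chainSum_empty_zero (x w : α) :
    chainSum ρ ζ x w ∅ 0 = if x = w then 1 else 0 := by
  rw [chainSum, ← (Equiv.funUnique (Fin 1) α).symm.sum_comp]
  by_cases h : x = w <;> simp [IsChainFrom, Subsingleton.strictMono, chainZeta,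
    interiorRanks_eq_empty_iff, h]

theorem chainSum_empty_one (x w : α) :
    chainSum ρ ζ x w ∅ 1 = if x < w then ζ x w else 0 := by
  rw [chainSum, ← (piFinTwoEquiv fun _ => α).symm.sum_comp, Fintype.sum_prod_type,
    Fintype.sum_eq_single x fun a ha => Finset.sum_eq_zero fun b _ => if_neg fun h => ha h.1.2.1,
    Fintype.sum_eq_single w fun b hb => if_neg fun h => hb h.1.2.2]
  simp [IsChainFrom, chainZeta, interiorRanks_eq_empty_iff,
    show Fin.cons x (Fin.cons w finZeroElim) = ![x, w] from rfl]

theorem flagF_empty (hq : IsQuasiGraded ρ ζ) (x w : α) : flagF ρ ζ x w ∅ = ζ x w := by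
  have hlong : ∀ k, chainSum ρ ζ x w ∅ (k + 2) = 0 := fun k =>
    chainSum_eq_zero fun f _ hf => by have := (interiorRanks_eq_empty_iff ρ f).1 hf; omega
  rw [flagF_eq_sum_chainSum x w ∅ (Nat.le_add_right _ 2), Finset.sum_range_succ',
    Finset.sum_range_succ', Finset.sum_eq_zero fun k _ => hlong k, chainSum_empty_one,
    chainSum_empty_zero, zero_add]
  rcases eq_or_ne x w with rfl | hxw
  · simp [hq.2.1]
  · by_cases hlt : x < w
    · simp [hlt, hxw]
    · rw [if_neg hlt, if_neg hxw, hq.2.2 x w fun hle => hlt (hle.lt_of_ne hxw), add_zero]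

end Chains

section Eulerian

variable [PartialOrder α] {ρ : α → ℕ} {ζ : α → α → ℚ}

theorem IsQuasiGraded.zeta_mul_zeta_eq_zero (hq : IsQuasiGraded ρ ζ) {x y z : α}
    (h : ¬ (x ≤ y ∧ y ≤ z)) : ζ x y * ζ y z = 0 := by
  rcases not_and_or.1 h with h | h
  · rw [hq.2.2 x y h, zero_mul]
  · rw [hq.2.2 y z h, mul_zero]

theorem IsQuasiGraded.zeta_eq_zero_of_rank_eq (hq : IsQuasiGraded ρ ζ) {x y : α} (hxy : x ≠ y)
    (h : ρ x = ρ y) : ζ x y = 0 :=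
  hq.2.2 x y fun hle => (hq.1 (hle.lt_of_ne hxy)).ne h

variable [Fintype α]

theorem sum_rank_eq_left_zeta_mul (hq : IsQuasiGraded ρ ζ) (x : α) (F : α → ℚ) :
    ∑ y ∈ univ.filter (fun y => ρ y = ρ x), ζ x y * F y = F x := by
  rw [Finset.sum_eq_single_of_mem x (by simp) fun y hy hyx => by
    rw [hq.zeta_eq_zero_of_rank_eq hyx.symm (Finset.mem_filter.1 hy).2.symm, zero_mul],
    hq.2.1, one_mul]

theorem sum_rank_eq_right_zeta_mul_zeta (hq : IsQuasiGraded ρ ζ) (x w : α) :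
    ∑ y ∈ univ.filter (fun y => ρ y = ρ w), ζ x y * ζ y w = ζ x w := by
  rw [Finset.sum_eq_single_of_mem w (by simp) fun y hy hyw => by
    rw [hq.zeta_eq_zero_of_rank_eq hyw (Finset.mem_filter.1 hy).2, mul_zero],
    hq.2.1, mul_one]

theorem sum_neg_one_pow_rank_zeta_mul_zeta (hq : IsQuasiGraded ρ ζ) (hE : IsEulerian ρ ζ)
    {x z : α} (hxz : x ≠ z) : ∑ y, (-1 : ℚ) ^ ρ y * (ζ x y * ζ y z) = 0 := by
  rw [← Finset.sum_subset (Finset.subset_univ (univ.filter fun y => x ≤ y ∧ y ≤ z))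
    fun y _ hy => by rw [hq.zeta_mul_zeta_eq_zero fun h => hy (by simpa using h), mul_zero]]
  by_cases hle : x ≤ z
  · have hE' : _ = iaDelta x z := hE x z hle
    rw [iaDelta, if_neg hxz] at hE'
    calc _ = (-1 : ℚ) ^ ρ x * ∑ y ∈ univ.filter (fun y => x ≤ y ∧ y ≤ z),
            (-1 : ℚ) ^ (ρ y - ρ x) * ζ x y * ζ y z := by
          rw [Finset.mul_sum]
          refine Finset.sum_congr rfl fun y hy => ?_
          rw [← Nat.add_sub_cancel' (hq.1.monotone (Finset.mem_filter.1 hy).2.1), pow_add,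
            Nat.add_sub_cancel_left]
          ring
      _ = 0 := by rw [hE', mul_zero]
  · exact Finset.sum_eq_zero fun y hy =>
      absurd ((Finset.mem_filter.1 hy).2.1.trans (Finset.mem_filter.1 hy).2.2) hle

theorem sum_Icc_neg_one_pow_sum_rank_zeta_mul_zeta (hq : IsQuasiGraded ρ ζ)
    (hE : IsEulerian ρ ζ) {x z : α} (hxz : ρ x < ρ z) :
    ∑ j ∈ Icc (ρ x) (ρ z), (-1 : ℚ) ^ j *
      ∑ y ∈ univ.filter (fun y => ρ y = j), ζ x y * ζ y z = 0 := by
  have hxz' : x ≠ z := fun h => hxz.ne (congrArg ρ h)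
  calc _ = ∑ j ∈ Icc (ρ x) (ρ z), ∑ y ∈ univ.filter (fun y => ρ y = j),
          (-1 : ℚ) ^ ρ y * (ζ x y * ζ y z) := by
        simp only [Finset.mul_sum]
        exact Finset.sum_congr rfl fun j _ => Finset.sum_congr rfl fun y hy => by
          rw [(Finset.mem_filter.1 hy).2]
    _ = ∑ y, (-1 : ℚ) ^ ρ y * (ζ x y * ζ y z) := by
      rw [Finset.sum_fiberwise_eq_sum_filter]
      refine Finset.sum_subset (Finset.subset_univ _) fun y _ hy => ?_
      rw [hq.zeta_mul_zeta_eq_zero fun h => hy ?_, mul_zero]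
      exact Finset.mem_filter.2 ⟨Finset.mem_univ y, Finset.mem_Icc.2
        ⟨hq.1.monotone h.1, hq.1.monotone h.2⟩⟩
    _ = 0 := sum_neg_one_pow_rank_zeta_mul_zeta hq hE hxz'

end Eulerian

section DehnSommerville

variable [Fintype α] [PartialOrder α] {ρ : α → ℕ} {ζ : α → α → ℚ}

/-- Clipping `T` to the ranks strictly between `ρ x` and `ρ w` realises the convention
`f̄_{T ∪ {ρ x}} = f̄_{T ∪ {ρ w}} = f̄_T`. -/
def flagFIoo (ρ : α → ℕ) (ζ : α → α → ℚ) (x w : α) (T : Finset ℕ) : ℚ :=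
  flagF ρ ζ x w (T ∩ Ioo (ρ x) (ρ w))

theorem flagFIoo_insert_of_le {x w : α} {T : Finset ℕ} {j : ℕ} (hj : j ≤ ρ x) :
    flagFIoo ρ ζ x w (insert j T) = flagFIoo ρ ζ x w T := by
  rw [flagFIoo, flagFIoo, Finset.insert_inter_of_notMem fun h => by
    have := (Finset.mem_Ioo.1 h).1; omega]

/-- If `ρ x < r < ρ w`, the chains counted have their second element at rank `r`; if `r` is
`ρ x` or `ρ w`, only `y = x` resp. `y = w` contributes. -/
theorem flagFIoo_eq_sum_rank_mul (hq : IsQuasiGraded ρ ζ) {x w : α} {T : Finset ℕ} {r : ℕ}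
    (hxr : ρ x ≤ r) (hrw : r ≤ ρ w) (hrT : ρ x < r → r < ρ w → r ∈ T)
    (hgap : ∀ t ∈ T, ρ x < t → r ≤ t) :
    flagFIoo ρ ζ x w T =
      ∑ y ∈ univ.filter (fun y => ρ y = r), ζ x y * flagFIoo ρ ζ y w T := by
  rcases hxr.eq_or_lt with rfl | hxr
  · exact (sum_rank_eq_left_zeta_mul hq x fun y => flagFIoo ρ ζ y w T).symm
  rcases hrw.eq_or_lt with rfl | hrw
  · have hT : T ∩ Ioo (ρ x) (ρ w) = ∅ := Finset.eq_empty_of_forall_notMem fun t ht => by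
      obtain ⟨ht, hxt, htw⟩ := Finset.mem_inter.1 ht |>.imp_right Finset.mem_Ioo.1
      have := hgap t ht hxt
      omega
    rw [flagFIoo, hT, flagF_empty hq, ← sum_rank_eq_right_zeta_mul_zeta hq]
    refine Finset.sum_congr rfl fun y hy => ?_
    rw [flagFIoo, (Finset.mem_filter.1 hy).2, Finset.Ioo_self, Finset.inter_empty, flagF_empty hq]
  · rw [flagFIoo, flagF_eq_sum_rank_mul hq (r := r) (by simp [hrT hxr hrw, hxr, hrw])
      (fun t ht => hgap t (Finset.mem_inter.1 ht).1 (Finset.mem_Ioo.1 (Finset.mem_inter.1 ht).2).1)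
      hxr hrw]
    refine Finset.sum_congr rfl fun y hy => ?_
    rw [flagFIoo, (Finset.mem_filter.1 hy).2]
    congr 2
    ext t
    simp only [Finset.mem_erase, Finset.mem_inter, Finset.mem_Ioo]
    constructor
    · rintro ⟨htr, ht, hxt, htw⟩
      exact ⟨ht, lt_of_le_of_ne (hgap t ht hxt) (Ne.symm htr), htw⟩
    · rintro ⟨ht, hrt, htw⟩
      exact ⟨hrt.ne', ht, hxr.trans hrt, htw⟩

theorem flagFIoo_insert_eq_sum_rank_mul (hq : IsQuasiGraded ρ ζ) {x w : α} {S : Finset ℕ}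
    {j k : ℕ} (hxj : ρ x ≤ j) (hjk : j ≤ k) (hkw : k ≤ ρ w) (hkS : k < ρ w → k ∈ S)
    (hgap : ∀ t ∈ S, ρ x < t → k ≤ t) :
    flagFIoo ρ ζ x w (insert j S) =
      ∑ z ∈ univ.filter (fun z => ρ z = k),
        (∑ u ∈ univ.filter (fun u => ρ u = j), ζ x u * ζ u z) * flagFIoo ρ ζ z w S := by
  rw [flagFIoo_eq_sum_rank_mul hq hxj (hjk.trans hkw) (fun _ _ => Finset.mem_insert_self j S)
    fun t ht hxt => (Finset.mem_insert.1 ht).elim (·.ge) fun ht => hjk.trans (hgap t ht hxt)]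
  calc _ = ∑ u ∈ univ.filter (fun u => ρ u = j), ζ x u *
        ∑ z ∈ univ.filter (fun z => ρ z = k), ζ u z * flagFIoo ρ ζ z w S := by
        refine Finset.sum_congr rfl fun u hu => ?_
        have hu : ρ u = j := (Finset.mem_filter.1 hu).2
        rw [flagFIoo_eq_sum_rank_mul hq (hu ▸ hjk) hkw
          (fun _ h => Finset.mem_insert_of_mem (hkS h)) fun t ht hut => ?_]
        · exact congrArg _ (Finset.sum_congr rfl fun z hz => by
            rw [flagFIoo_insert_of_le ((Finset.mem_filter.1 hz).2 ▸ hjk)])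
        · rcases Finset.mem_insert.1 ht with rfl | ht
          · omega
          · exact hgap t ht (hxj.trans_lt (hu ▸ hut))
    _ = _ := by
        simp only [Finset.mul_sum, Finset.sum_mul]
        rw [Finset.sum_comm]
        exact Finset.sum_congr rfl fun _ _ => Finset.sum_congr rfl fun _ _ => by ring

theorem sum_Icc_flagFIoo_insert_eq_zero_of_rank_eq (hq : IsQuasiGraded ρ ζ)
    (hE : IsEulerian ρ ζ) {x w : α} {S : Finset ℕ} {k : ℕ} (hxk : ρ x < k) (hkw : k ≤ ρ w)
    (hkS : k < ρ w → k ∈ S) (hgap : ∀ t ∈ S, ρ x < t → k ≤ t) :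
    ∑ j ∈ Icc (ρ x) k, (-1 : ℚ) ^ j * flagFIoo ρ ζ x w (insert j S) = 0 := by
  calc _ = ∑ j ∈ Icc (ρ x) k, ∑ z ∈ univ.filter (fun z => ρ z = k), (-1 : ℚ) ^ j *
        (∑ u ∈ univ.filter (fun u => ρ u = j), ζ x u * ζ u z) * flagFIoo ρ ζ z w S :=
        Finset.sum_congr rfl fun j hj => by
          rw [flagFIoo_insert_eq_sum_rank_mul hq (Finset.mem_Icc.1 hj).1 (Finset.mem_Icc.1 hj).2
            hkw hkS hgap, Finset.mul_sum]
          simp only [mul_assoc]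
    _ = ∑ z ∈ univ.filter (fun z => ρ z = k), (∑ j ∈ Icc (ρ x) k, (-1 : ℚ) ^ j *
        ∑ u ∈ univ.filter (fun u => ρ u = j), ζ x u * ζ u z) * flagFIoo ρ ζ z w S := by
        rw [Finset.sum_comm]
        simp only [Finset.sum_mul]
    _ = 0 := Finset.sum_eq_zero fun z hz => by
        rw [← (Finset.mem_filter.1 hz).2, sum_Icc_neg_one_pow_sum_rank_zeta_mul_zeta hq hE
          ((Finset.mem_filter.1 hz).2 ▸ hxk), zero_mul]

theorem sum_Icc_flagFIoo_insert_eq_zero (hq : IsQuasiGraded ρ ζ) (hE : IsEulerian ρ ζ)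
    {x w : α} {S : Finset ℕ} {i k : ℕ} (hxi : ρ x ≤ i) (hik : i < k) (hkw : k ≤ ρ w)
    (hiS : ρ x < i → i ∈ S) (hkS : k < ρ w → k ∈ S) (hgap : ∀ t ∈ S, i < t → k ≤ t) :
    ∑ j ∈ Icc i k, (-1 : ℚ) ^ j * flagFIoo ρ ζ x w (insert j S) = 0 := by
  induction hd : i - ρ x using Nat.strong_induction_on generalizing x with
  | _ d ih =>
  rcases hxi.eq_or_lt with rfl | hxi
  · exact sum_Icc_flagFIoo_insert_eq_zero_of_rank_eq hq hE hik hkw hkS hgap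
  -- peel off the lowest rank `s` of `S` above `ρ x`, which is at most `i`
  have hne : (S.filter fun t => ρ x < t ∧ t ≤ i).Nonempty := ⟨i, by simp [hiS hxi, hxi]⟩
  set s := (S.filter fun t => ρ x < t ∧ t ≤ i).min' hne
  obtain ⟨hsS, hxs, hsi⟩ := Finset.mem_filter.1 (Finset.min'_mem _ hne)
  have hgap' : ∀ j ∈ Icc i k, ∀ t ∈ insert j S, ρ x < t → s ≤ t := by
    intro j hj t ht hxt
    rcases Finset.mem_insert.1 ht with rfl | ht
    · exact hsi.trans (Finset.mem_Icc.1 hj).1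
    · rcases le_or_gt t i with hti | hit
      · exact Finset.min'_le _ _ (by simp [ht, hxt, hti])
      · exact hsi.trans hit.le
  calc _ = ∑ y ∈ univ.filter (fun y => ρ y = s),
        ζ x y * ∑ j ∈ Icc i k, (-1 : ℚ) ^ j * flagFIoo ρ ζ y w (insert j S) := by
        rw [Finset.sum_congr rfl fun j hj => by
          rw [flagFIoo_eq_sum_rank_mul hq hxs.le (hsi.trans (hik.le.trans hkw))
            (fun _ _ => Finset.mem_insert_of_mem hsS) (hgap' j hj), Finset.mul_sum]]
        rw [Finset.sum_comm]
        exact Finset.sum_congr rfl fun _ _ => by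
          rw [Finset.mul_sum]
          exact Finset.sum_congr rfl fun _ _ => mul_left_comm _ _ _
    _ = 0 := Finset.sum_eq_zero fun y hy => by
        have hy : ρ y = s := (Finset.mem_filter.1 hy).2
        rw [ih (i - ρ y) (by omega) (hy ▸ hsi) (fun _ => hiS hxi) rfl, mul_zero]

end DehnSommerville

/-- the generalized Dehn–Sommerville relations for the flag
`f̄`-vector of an Eulerian quasi-graded poset of rank `n+1`.  Intersecting with
`Finset.Icc 1 n` implements the conventions `f̄_{S∪{0}} = f̄_{S∪{n+1}} = f̄_S`. -/
theorem generalized_dehn_sommerville {α : Type*} [Fintype α] [PartialOrder α]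
    [BoundedOrder α] (ρ : α → ℕ) (ζ : α → α → ℚ)
    (hq : IsQuasiGraded ρ ζ) (hE : IsEulerian ρ ζ)
    (n : ℕ) (h0 : ρ (⊥ : α) = 0) (h1 : ρ (⊤ : α) = n + 1)
    (S : Finset ℕ) (hS : S ⊆ Finset.Icc 1 n)
    (i k : ℕ) (hi : i ∈ S ∪ ({0, n + 1} : Finset ℕ)) (hk : k ∈ S ∪ ({0, n + 1} : Finset ℕ))
    (hik : i < k) (hgap : S ∩ Finset.Icc (i + 1) (k - 1) = ∅) :
    ∑ j ∈ Finset.Icc i k,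
      (-1 : ℚ) ^ j * flagF ρ ζ (⊥ : α) ⊤ ((S ∪ {j}) ∩ Finset.Icc 1 n) = 0 := by
  simp only [Finset.mem_union, Finset.mem_insert, Finset.mem_singleton] at hi hk
  have hkn : k ≤ n + 1 := by
    rcases hk with hk | hk | hk
    · exact (Finset.mem_Icc.1 (hS hk)).2.trans n.le_succ
    all_goals omega
  have hIoo : Ioo (ρ (⊥ : α)) (ρ ⊤) = Icc 1 n := by
    ext t
    simp only [h0, h1, Finset.mem_Ioo, Finset.mem_Icc]
    omega
  have key := sum_Icc_flagFIoo_insert_eq_zero hq hE (x := (⊥ : α)) (w := ⊤) (S := S)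
    (h0 ▸ i.zero_le) hik (h1 ▸ hkn) (fun h => hi.resolve_right (by rw [h0] at h; omega))
    (fun h => hk.resolve_right (by rw [h1] at h; omega))
    fun t ht hit => by
      by_contra! htk
      exact Finset.notMem_empty t (hgap ▸ Finset.mem_inter.2 ⟨ht, Finset.mem_Icc.2 ⟨hit, by omega⟩⟩)
  simpa only [flagFIoo, hIoo, Finset.union_singleton] using key
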